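/- arXiv:2204.08794 — 5 statements merged into one kernel-verified Lean document; each statement's English description precedes it below -/
import Mathlib

section
/- Let R be a (possibly noncommutative) ring in which every prime two-sided ideal is completely prime. Then for every two-sided ideal I, the radical √I (the intersection of all prime two-sided ideals containing I) equals the two-sided ideal generated by {x ∈ R | xⁿ ∈ I for some n ≥ 1}. -/
/-- A two-sided ideal `P` is prime if it is proper and for all two-sided ideals `A`, `B`,
`A·B ⊆ P` (i.e. all products `a*b`, `a ∈ A`, `b ∈ B`, lie in `P`) implies `A ⊆ P` or `B ⊆ P`. -/
def TwoSidedIdeal.IsPrimeTS {R : Type*} [Ring R] (P : TwoSidedIdeal R) : Prop :=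
  P ≠ ⊤ ∧ ∀ A B : TwoSidedIdeal R, (∀ a ∈ A, ∀ b ∈ B, a * b ∈ P) → A ≤ P ∨ B ≤ P

/-- A two-sided ideal `P` is completely prime if `a*b ∈ P` implies `a ∈ P` or `b ∈ P`. -/
def TwoSidedIdeal.IsCompletelyPrimeTS {R : Type*} [Ring R] (P : TwoSidedIdeal R) : Prop :=
  P ≠ ⊤ ∧ ∀ a b : R, a * b ∈ P → a ∈ P ∨ b ∈ P

/-- The radical of a two-sided ideal: the intersection of all prime two-sided ideals
containing it (equal to `⊤ = R` if no prime contains it). -/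
def TwoSidedIdeal.radTS {R : Type*} [Ring R] (I : TwoSidedIdeal R) : TwoSidedIdeal R :=
  sInf {P : TwoSidedIdeal R | P.IsPrimeTS ∧ I ≤ P}

theorem pow_mem_of_mem_cp {R : Type*} [Ring R] {P : TwoSidedIdeal R}
    (hP : P.IsCompletelyPrimeTS) {x : R} {n : ℕ} (hn : 1 ≤ n) (hx : x ^ n ∈ P) : x ∈ P := by
  induction n with
  | zero => omega
  | succ m ih =>
    rcases Nat.eq_or_lt_of_le hn with h | h
    · simpa [← h] using hx
    · rw [pow_succ] at hx
      rcases hP.2 _ _ hx with h' | h'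
      · exact ih (by omega) h'
      · exact h'

/-- If every prime two-sided ideal of `R` is completely prime, then the radical of any
two-sided ideal `I` equals the two-sided ideal generated by the elements having some
power (`n ≥ 1`) in `I`. -/
theorem radTS_eq_span_pow_mem {R : Type*} [Ring R]
    (hcp : ∀ P : TwoSidedIdeal R, P.IsPrimeTS → P.IsCompletelyPrimeTS)
    (I : TwoSidedIdeal R) :
    I.radTS = TwoSidedIdeal.span {x : R | ∃ n : ℕ, 1 ≤ n ∧ x ^ n ∈ I} := by
  apply le_antisymm
  · -- hard direction: radTS ≤ span
    intro x hx
    apply TwoSidedIdeal.subset_span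
    by_contra hxI
    simp only [Set.mem_setOf_eq, not_exists, not_and] at hxI
    -- Zorn: maximal ideal containing I avoiding all powers of x
    set 𝒜 : Set (TwoSidedIdeal R) := {J | I ≤ J ∧ ∀ n : ℕ, 1 ≤ n → x ^ n ∉ J} with h𝒜
    have hI𝒜 : I ∈ 𝒜 := ⟨le_refl _, hxI⟩
    obtain ⟨P, -, hPmax⟩ := zorn_le_nonempty₀ 𝒜 (fun c hc hchain J hJ => by
      refine ⟨TwoSidedIdeal.mk' (⋃ K ∈ c, (K : Set R)) ?_ ?_ ?_ ?_ ?_, ⟨?_, ?_⟩, ?_⟩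
      · exact Set.mem_biUnion hJ (TwoSidedIdeal.zero_mem J)
      · rintro a b ha hb
        simp only [Set.mem_iUnion, SetLike.mem_coe] at ha hb ⊢
        obtain ⟨K₁, hK₁, ha⟩ := ha
        obtain ⟨K₂, hK₂, hb⟩ := hb
        rcases hchain.total hK₁ hK₂ with h | h
        · exact ⟨K₂, hK₂, TwoSidedIdeal.add_mem _ (h ha) hb⟩
        · exact ⟨K₁, hK₁, TwoSidedIdeal.add_mem _ ha (h hb)⟩
      · rintro a ha
        simp only [Set.mem_iUnion, SetLike.mem_coe] at ha ⊢
        obtain ⟨K, hK, ha⟩ := ha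
        exact ⟨K, hK, TwoSidedIdeal.neg_mem _ ha⟩
      · rintro a b hb
        simp only [Set.mem_iUnion, SetLike.mem_coe] at hb ⊢
        obtain ⟨K, hK, hb⟩ := hb
        exact ⟨K, hK, TwoSidedIdeal.mul_mem_left _ _ _ hb⟩
      · rintro a b ha
        simp only [Set.mem_iUnion, SetLike.mem_coe] at ha ⊢
        obtain ⟨K, hK, ha⟩ := ha
        exact ⟨K, hK, TwoSidedIdeal.mul_mem_right _ _ _ ha⟩
      · intro y hy
        rw [TwoSidedIdeal.mem_mk']
        exact Set.mem_biUnion hJ ((hc hJ).1 hy)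
      · intro n hn hmem
        rw [TwoSidedIdeal.mem_mk'] at hmem
        simp only [Set.mem_iUnion, SetLike.mem_coe] at hmem
        obtain ⟨K, hK, hmem⟩ := hmem
        exact (hc hK).2 n hn hmem
      · intro K hK y hy
        rw [TwoSidedIdeal.mem_mk']
        exact Set.mem_biUnion hK hy) I hI𝒜
    have hPA : P ∈ 𝒜 := hPmax.1
    -- P is prime
    have hPprime : P.IsPrimeTS := by
      constructor
      · intro h
        rw [h] at hPA
        exact hPA.2 1 le_rfl (TwoSidedIdeal.mem_top R)
      · intro A B hAB
        by_contra hor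
        push_neg at hor
        obtain ⟨hA, hB⟩ := hor
        have key : ∀ C : TwoSidedIdeal R, ¬ C ≤ P → ∃ n : ℕ, 1 ≤ n ∧ x ^ n ∈ P ⊔ C := by
          intro C hC
          by_contra h
          push_neg at h
          have hmem : P ⊔ C ∈ 𝒜 := ⟨le_trans hPA.1 le_sup_left, fun n hn => h n hn⟩
          have := hPmax.2 hmem le_sup_left
          exact hC (le_trans le_sup_right this)
        obtain ⟨n₁, hn₁, hx₁⟩ := key A hA
        obtain ⟨n₂, hn₂, hx₂⟩ := key B hB
        rw [TwoSidedIdeal.mem_sup] at hx₁ hx₂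
        obtain ⟨p₁, hp₁, a, ha, he₁⟩ := hx₁
        obtain ⟨p₂, hp₂, b, hb, he₂⟩ := hx₂
        have : x ^ (n₁ + n₂) ∈ P := by
          rw [pow_add, ← he₁, ← he₂]
          have : (p₁ + a) * (p₂ + b) = p₁ * (p₂ + b) + a * p₂ + a * b := by noncomm_ring
          rw [this]
          exact TwoSidedIdeal.add_mem _
            (TwoSidedIdeal.add_mem _ (TwoSidedIdeal.mul_mem_right _ _ _ hp₁)
              (TwoSidedIdeal.mul_mem_left _ _ _ hp₂))
            (hAB a ha b hb)
        exact hPA.2 (n₁ + n₂) (by omega) this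
    -- but radTS ≤ P, so x ∈ P, contradiction
    have : x ∈ P := by
      rw [TwoSidedIdeal.radTS, TwoSidedIdeal.mem_sInf] at hx
      exact hx P ⟨hPprime, hPA.1⟩
    exact hPA.2 1 le_rfl (by simpa using this)
  · -- easy direction: span ≤ radTS
    rw [TwoSidedIdeal.radTS]
    apply le_sInf
    rintro P ⟨hP, hIP⟩
    intro y hy
    rw [TwoSidedIdeal.mem_span_iff] at hy
    apply hy
    rintro z ⟨n, hn, hz⟩
    exact pow_mem_of_mem_cp (hcp P hP) hn (hIP hz)
end

section
/- Let R be a ring in which every prime two-sided ideal is completely prime. Then the poset Rad(R) of radical two-sided ideals of R, ordered by inclusion, forms a frame: meets are given by intersection, the join of a family {I_j} is √(the ideal generated by ⋃_j I_j), and finite meets distribute over arbitrary joins: J ∩ (⋁_j I_j) = ⋁_j (J ∩ I_j). -/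
namespace TwoSidedIdeal

variable {R : Type*} [Ring R]

lemma le_radTS (I : TwoSidedIdeal R) : I ≤ I.radTS :=
  le_sInf fun _ hP => hP.2

lemma radTS_le {I P : TwoSidedIdeal R} (hP : P.IsPrimeTS) (h : I ≤ P) : I.radTS ≤ P :=
  sInf_le ⟨hP, h⟩

lemma radTS_mono {I J : TwoSidedIdeal R} (h : I ≤ J) : I.radTS ≤ J.radTS :=
  le_sInf fun _ hP => sInf_le ⟨hP.1, h.trans hP.2⟩

lemma mem_radTS {I : TwoSidedIdeal R} {x : R} :
    x ∈ I.radTS ↔ ∀ P : TwoSidedIdeal R, P.IsPrimeTS → I ≤ P → x ∈ P := by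
  simp only [radTS, mem_sInf, Set.mem_setOf_eq, and_imp]

end TwoSidedIdeal

open TwoSidedIdeal


/-- If every prime two-sided ideal of `R` is completely prime, then the radical two-sided
ideals of `R` form a frame: intersections of radicals are radical (meets), the join of a
family `{I_j}` of radicals is the radical `√(⨆ I_j)` of the generated ideal, and finite
meets distribute over arbitrary joins: `J ∩ (⋁_j I_j) = ⋁_j (J ∩ I_j)`. -/
theorem radical_ideals_form_frame {R : Type*} [Ring R]
    (hcp : ∀ P : TwoSidedIdeal R, P.IsPrimeTS → P.IsCompletelyPrimeTS) :
    (∀ {ι : Sort*} (I : ι → TwoSidedIdeal R), (∀ j, (I j).radTS = I j) →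
        (⨅ j, I j).radTS = ⨅ j, I j) ∧
    (∀ (I : TwoSidedIdeal R), I.radTS.radTS = I.radTS) ∧
    (∀ (J : TwoSidedIdeal R), J.radTS = J →
      ∀ {ι : Sort*} (I : ι → TwoSidedIdeal R), (∀ j, (I j).radTS = I j) →
        J ⊓ (⨆ j, I j).radTS = (⨆ j, J ⊓ I j).radTS) := by
  refine ⟨?_, ?_, ?_⟩
  · intro ι I hI
    refine le_antisymm (le_iInf fun j => ?_) (le_radTS _)
    calc (⨅ j, I j).radTS ≤ (I j).radTS := radTS_mono (iInf_le _ j)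
      _ = I j := hI j
  · intro I
    refine le_antisymm ?_ (le_radTS _)
    exact le_sInf fun P hP => sInf_le ⟨hP.1, radTS_le hP.1 hP.2⟩
  · intro J hJ ι I hI
    refine le_antisymm ?_ ?_
    · intro x hx
      rw [TwoSidedIdeal.mem_inf] at hx
      obtain ⟨hxJ, hxR⟩ := hx
      rw [mem_radTS] at hxR ⊢
      intro P hP hle
      by_cases hxP : x ∈ P
      · exact hxP
      · refine absurd (hxR P hP (iSup_le fun j => fun y hy => ?_)) hxP
        have hxy : x * y ∈ P := hle ((le_iSup (fun j => J ⊓ I j) j)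
          ((TwoSidedIdeal.mem_inf R).mpr ⟨J.mul_mem_right _ _ hxJ, (I j).mul_mem_left _ _ hy⟩))
        exact ((hcp P hP).2 x y hxy).resolve_left hxP
    · refine le_inf ?_ (radTS_mono (iSup_le fun j => le_trans inf_le_right (le_iSup I j)))
      calc (⨆ j, J ⊓ I j).radTS ≤ J.radTS :=
            radTS_mono (iSup_le fun j => inf_le_left)
        _ = J := hJ
end

section
/- Let R be a commutative ring. In the frame of radical ideals of R (ordered by inclusion, with meet = intersection and join of a family = radical of the sum), an element is compact (finite) if and only if it is of the form √(a₁,…,aₙ) for finitely many elements a₁,…,aₙ ∈ R, equivalently of the form √(a) for a finitely generated ideal (a). -/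
/-- An element of the lattice of radical ideals (join = radical of sum) is compact if
whenever it lies below the join of a set of radical ideals, it lies below the join of a
finite subset. -/
def IsCompactRadical {R : Type*} [CommRing R] (I : Ideal R) : Prop :=
  ∀ S : Set (Ideal R), (∀ J ∈ S, J.IsRadical) → I ≤ (sSup S).radical →
    ∃ T : Finset (Ideal R), ↑T ⊆ S ∧ I ≤ (sSup (↑T : Set (Ideal R))).radical

/-- In the frame of radical ideals of a commutative ring, a radical ideal is compact iff
it is the radical of a finitely generated ideal `√(a₁,…,aₙ)`. -/
theorem isCompactRadical_iff_radical_span_finite {R : Type*} [CommRing R]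
    (I : Ideal R) (hI : I.IsRadical) :
    IsCompactRadical I ↔ ∃ s : Finset R, I = (Ideal.span (↑s : Set R)).radical := by
  classical
  constructor
  · intro hc
    -- apply compactness to the set of radicals of principal ideals generated by elements of I
    obtain ⟨T, hTS, hIT⟩ := hc ((fun a => (Ideal.span {a}).radical) '' (I : Set R))
      (by rintro J ⟨a, _, rfl⟩; exact Ideal.radical_isRadical _)
      (by
        refine le_trans ?_ Ideal.le_radical
        intro x hx
        exact le_sSup (Set.mem_image_of_mem (fun a => (Ideal.span ({a} : Set R)).radical) hx) (Ideal.le_radical (Ideal.mem_span_singleton_self x)))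
    -- choose generators
    choose f hf1 hf2 using fun (J : T) => hTS J.2
    refine ⟨T.attach.image f, le_antisymm ?_ ?_⟩
    · refine le_trans hIT ?_
      rw [← Ideal.radical_idem (Ideal.span _)]
      apply Ideal.radical_mono
      apply sSup_le
      rintro J hJ
      have h2 : (Ideal.span {f ⟨J, hJ⟩}).radical = J := hf2 ⟨J, hJ⟩
      rw [← h2]
      apply Ideal.radical_mono
      rw [Ideal.span_le, Set.singleton_subset_iff]
      apply Ideal.subset_span
      simp only [Finset.coe_image]
      exact ⟨⟨J, hJ⟩, Finset.mem_coe.mpr (Finset.mem_attach _ _), rfl⟩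
    · rw [← hI.radical]
      apply Ideal.radical_mono
      rw [Ideal.span_le]
      intro x hx
      simp only [Finset.coe_image, Set.mem_image] at hx
      obtain ⟨J, _, rfl⟩ := hx
      exact hf1 J
  · rintro ⟨s, rfl⟩
    intro S hSrad hle
    -- each generator a ∈ s has a power in sSup S
    have key : ∀ a ∈ s, ∃ T : Finset (Ideal R), ↑T ⊆ S ∧
        a ∈ (sSup (↑T : Set (Ideal R))).radical := by
      intro a ha
      have : a ∈ (sSup S).radical := hle (Ideal.le_radical (Ideal.subset_span ha))
      obtain ⟨n, hn⟩ := this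
      have hsp : Ideal.span {a ^ n} ≤ sSup S := by
        rw [Ideal.span_le, Set.singleton_subset_iff]; exact hn
      obtain ⟨T, hTS, hT⟩ := (CompleteLattice.isCompactElement_iff_exists_le_sSup_of_le_sSup (k := _)).mp (Submodule.singleton_span_isCompactElement (a ^ n)) S hsp
      refine ⟨T, hTS, ⟨n, ?_⟩⟩
      have : (a : R) ^ n ∈ T.sup id := hT (Ideal.mem_span_singleton_self _)
      exact le_sSup_iff.mpr (fun b hb => (Finset.sup_le fun J hJ => hb hJ : T.sup id ≤ b)) this
    choose! g hg1 hg2 using key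
    refine ⟨s.biUnion g, ?_, ?_⟩
    · intro J hJ
      simp only [Finset.coe_biUnion, Set.mem_iUnion] at hJ
      obtain ⟨a, ha, hJa⟩ := hJ
      exact hg1 a ha hJa
    · rw [← Ideal.radical_idem (sSup _)]
      apply Ideal.radical_mono
      rw [Ideal.span_le]
      intro a ha
      refine Ideal.radical_mono (sSup_le_sSup ?_) (hg2 a ha)
      intro J hJ
      simp only [Finset.coe_biUnion, Set.mem_iUnion]
      exact ⟨a, ha, hJ⟩
end

section
/- Let R be a ring in which every prime two-sided ideal is completely prime. For any two-sided ideals J₁, J₂ and radical ideal I: if J₁·J₂ ⊆ I then J₁ ∩ J₂ ⊆ I. In particular every radical ideal I that is a prime element of the frame of radical ideals is a prime two-sided ideal of R. -/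
lemma le_radTS' {R : Type*} [Ring R] (I : TwoSidedIdeal R) : I ≤ I.radTS :=
  le_sInf fun _ hP => hP.2

lemma radTS_le_of_prime {R : Type*} [Ring R] {I P : TwoSidedIdeal R}
    (hP : P.IsPrimeTS) (h : I ≤ P) : I.radTS ≤ P :=
  sInf_le ⟨hP, h⟩

lemma radTS_radical {R : Type*} [Ring R] (I : TwoSidedIdeal R) : I.radTS.radTS = I.radTS := by
  unfold TwoSidedIdeal.radTS
  congr 1
  ext P
  exact ⟨fun ⟨hP, h⟩ => ⟨hP, le_trans (le_radTS' I) h⟩,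
    fun ⟨hP, h⟩ => ⟨hP, radTS_le_of_prime hP h⟩⟩

/-- If every prime two-sided ideal of `R` is completely prime, then for two-sided ideals
`J₁, J₂` and a radical ideal `I`: `J₁·J₂ ⊆ I` implies `J₁ ∩ J₂ ⊆ I`.  In particular,
every radical ideal that is a prime element of the frame of radical ideals is a prime
two-sided ideal of `R`. -/
theorem mul_le_radical_inf_le_and_prime_element_isPrime {R : Type*} [Ring R]
    (hcp : ∀ P : TwoSidedIdeal R, P.IsPrimeTS → P.IsCompletelyPrimeTS) :
    (∀ J₁ J₂ I : TwoSidedIdeal R, I.radTS = I →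
      (∀ a ∈ J₁, ∀ b ∈ J₂, a * b ∈ I) → J₁ ⊓ J₂ ≤ I) ∧
    (∀ I : TwoSidedIdeal R, I.radTS = I → I ≠ ⊤ →
      (∀ A B : TwoSidedIdeal R, A.radTS = A → B.radTS = B → A ⊓ B ≤ I → A ≤ I ∨ B ≤ I) →
      I.IsPrimeTS) := by
  constructor
  · intro J₁ J₂ I hI hmul x hx
    rw [← hI, TwoSidedIdeal.radTS, TwoSidedIdeal.mem_sInf]
    rintro P ⟨hP, hIP⟩
    have hx2 : x * x ∈ P := hIP (hmul x hx.1 x hx.2)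
    rcases (hcp P hP).2 x x hx2 with h | h <;> exact h
  · intro I hI hne hfr
    refine ⟨hne, fun A B hAB => ?_⟩
    have hinf : A.radTS ⊓ B.radTS ≤ I := by
      intro x hx
      rw [← hI, TwoSidedIdeal.radTS, TwoSidedIdeal.mem_sInf]
      rintro P ⟨hP, hIP⟩
      rcases hP.2 A B (fun a ha b hb => hIP (hAB a ha b hb)) with h | h
      · exact radTS_le_of_prime hP h hx.1
      · exact radTS_le_of_prime hP h hx.2
    rcases hfr A.radTS B.radTS (radTS_radical A) (radTS_radical B) hinf with h | h
    · exact Or.inl (le_trans (le_radTS' A) h)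
    · exact Or.inr (le_trans (le_radTS' B) h)
end

section
/- Let R be a ring in which every prime two-sided ideal is completely prime. Then for elements a, b ∈ R: √⟨a⟩ ∩ √⟨b⟩ = √⟨{a·s·b : s ∈ R}⟩; that is, the meet of the principal radical ideals of a and b equals the radical of the ideal generated by all products a·s·b. -/
lemma span_le_iff' {R : Type*} [Ring R] {s : Set R} {I : TwoSidedIdeal R} :
    TwoSidedIdeal.span s ≤ I ↔ s ⊆ I := by
  constructor
  · exact fun h x hx => h (TwoSidedIdeal.subset_span hx)
  · intro h x hx
    exact TwoSidedIdeal.mem_span_iff.mp hx I h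

/-- If every prime two-sided ideal of `R` is completely prime, then for `a, b ∈ R` the
meet of the principal radical ideals `√⟨a⟩` and `√⟨b⟩` equals the radical of the
two-sided ideal generated by all products `a·s·b` with `s ∈ R`. -/
theorem radical_inf_eq_radical_span_mul {R : Type*} [Ring R]
    (hcp : ∀ P : TwoSidedIdeal R, P.IsPrimeTS → P.IsCompletelyPrimeTS) (a b : R) :
    (TwoSidedIdeal.span {a}).radTS ⊓ (TwoSidedIdeal.span {b}).radTS =
      (TwoSidedIdeal.span {x : R | ∃ s : R, x = a * s * b}).radTS := by
  unfold TwoSidedIdeal.radTS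
  rw [← sInf_union]
  congr 1
  ext P
  simp only [Set.mem_union, Set.mem_setOf_eq]
  constructor
  · rintro (⟨hP, hle⟩ | ⟨hP, hle⟩) <;> refine ⟨hP, span_le_iff'.mpr ?_⟩
    · rintro x ⟨s, rfl⟩
      have ha : a ∈ P := hle (TwoSidedIdeal.subset_span rfl)
      exact P.mul_mem_right _ _ (P.mul_mem_right _ _ ha)
    · rintro x ⟨s, rfl⟩
      have hb : b ∈ P := hle (TwoSidedIdeal.subset_span rfl)
      exact P.mul_mem_left _ _ hb
  · rintro ⟨hP, hle⟩
    have hab : a * b ∈ P := by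
      have : a * 1 * b ∈ P := hle (TwoSidedIdeal.subset_span ⟨1, rfl⟩)
      simpa using this
    rcases (hcp P hP).2 a b hab with h | h
    · exact Or.inl ⟨hP, span_le_iff'.mpr (by simpa using h)⟩
    · exact Or.inr ⟨hP, span_le_iff'.mpr (by simpa using h)⟩
end
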